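/- The map σ* : H* → GL(F × F), (b,h) ↦ σ*(b,h), is a group homomorphism; in particular each σ*(b,h) is an invertible linear map of F × F. -/
import Mathlib


/-- Multiplication in `H* = 𝔥 × H`: `(b,h)·(b',h') = (b + ρ(h)(b'), h h')`. -/
def hstarMul {H 𝔥 : Type*} [Group H] [AddCommGroup 𝔥] [Module ℝ 𝔥]
    (ρ : H →* (Module.End ℝ 𝔥)ˣ) (k k' : 𝔥 × H) : 𝔥 × H :=
  (k.1 + (ρ k.2 : Module.End ℝ 𝔥) k'.1, k.2 * k'.2)

/-- The prolonged representation `σ*(b,h)(ξ,u) = (σ(h)ξ, δ(b)(σ(h)ξ) + σ(h)u)`,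
as a linear endomorphism of `F × F`. -/
def sigmaStarL {H 𝔥 F : Type*} [Group H] [AddCommGroup 𝔥] [Module ℝ 𝔥]
    [AddCommGroup F] [Module ℝ F]
    (σ : H →* (Module.End ℝ F)ˣ) (δ : 𝔥 →ₗ[ℝ] Module.End ℝ F)
    (k : 𝔥 × H) : (F × F) →ₗ[ℝ] F × F where
  toFun v := ((σ k.2 : Module.End ℝ F) v.1,
    δ k.1 ((σ k.2 : Module.End ℝ F) v.1) + (σ k.2 : Module.End ℝ F) v.2)
  map_add' v w := by
    simp [Prod.ext_iff, map_add]
    abel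
  map_smul' c v := by
    simp [Prod.ext_iff, map_smul, smul_add]

/-- The map `σ* : H* → GL(F × F)` is a group homomorphism: each `σ*(b,h)` is an
invertible linear map of `F × F`, `σ*` sends the identity `(0,1)` of `H*` to the
identity, and `σ*((b,h)·(b',h')) = σ*(b,h) ∘ σ*(b',h')`. -/
theorem sigmaStar_is_hom {H 𝔥 F : Type*} [Group H] [AddCommGroup 𝔥] [Module ℝ 𝔥]
    [AddCommGroup F] [Module ℝ F]
    (ρ : H →* (Module.End ℝ 𝔥)ˣ) (σ : H →* (Module.End ℝ F)ˣ)
    (δ : 𝔥 →ₗ[ℝ] Module.End ℝ F)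
    (heq : ∀ (h : H) (b : 𝔥), δ ((ρ h : Module.End ℝ 𝔥) b)
      = ↑(σ h) * δ b * (↑(σ h)⁻¹ : Module.End ℝ F)) :
    (∀ k : 𝔥 × H, Function.Bijective (sigmaStarL σ δ k)) ∧
    (sigmaStarL σ δ ((0 : 𝔥), (1 : H)) = LinearMap.id) ∧
    (∀ k k' : 𝔥 × H,
      sigmaStarL σ δ (hstarMul ρ k k') = (sigmaStarL σ δ k).comp (sigmaStarL σ δ k')) := by
  have cancel : ∀ (h : H) (x : F),
      ((σ h)⁻¹ : (Module.End ℝ F)ˣ).1 ((σ h : Module.End ℝ F) x) = x := by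
    intro h x
    rw [← Module.End.mul_apply, ← Units.val_mul, inv_mul_cancel, Units.val_one,
      Module.End.one_apply]
  have cancelρ : ∀ (h : H) (x : 𝔥),
      (ρ h : Module.End ℝ 𝔥) (((ρ h)⁻¹ : (Module.End ℝ 𝔥)ˣ).1 x) = x := by
    intro h x
    rw [← Module.End.mul_apply, ← Units.val_mul, mul_inv_cancel, Units.val_one,
      Module.End.one_apply]
  have hid : sigmaStarL σ δ ((0 : 𝔥), (1 : H)) = LinearMap.id := by
    apply LinearMap.ext; intro v; simp [sigmaStarL]
  have hmul : ∀ k k' : 𝔥 × H,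
      sigmaStarL σ δ (hstarMul ρ k k') = (sigmaStarL σ δ k).comp (sigmaStarL σ δ k') := by
    intro k k'
    apply LinearMap.ext; intro v
    apply Prod.ext
    · simp [sigmaStarL, hstarMul]
    · simp only [sigmaStarL, hstarMul, LinearMap.coe_mk, AddHom.coe_mk, LinearMap.comp_apply,
        map_add, map_mul, Units.val_mul]
      have h2 : (δ ((ρ k.2 : Module.End ℝ 𝔥) k'.1)) ((σ k.2 : Module.End ℝ F)
          ((σ k'.2 : Module.End ℝ F) v.1))
          = (σ k.2 : Module.End ℝ F) ((δ k'.1) ((σ k'.2 : Module.End ℝ F) v.1)) := by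
        rw [heq k.2 k'.1]
        simp only [Module.End.mul_apply, cancel]
      simp only [Module.End.mul_apply, LinearMap.add_apply]
      rw [h2]
      abel
  refine ⟨?_, hid, hmul⟩
  intro k
  set ki : 𝔥 × H := (-(((ρ k.2)⁻¹ : (Module.End ℝ 𝔥)ˣ) : Module.End ℝ 𝔥) k.1, k.2⁻¹) with hki
  have e1 : hstarMul ρ k ki = ((0:𝔥), (1:H)) := by
    simp [hstarMul, hki, cancelρ]
  have e2 : hstarMul ρ ki k = ((0:𝔥), (1:H)) := by
    simp only [hstarMul, hki, map_inv, map_neg]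
    simp
  have h1 : (sigmaStarL σ δ k).comp (sigmaStarL σ δ ki) = LinearMap.id := by
    rw [← hmul, e1]; exact hid
  have h2 : (sigmaStarL σ δ ki).comp (sigmaStarL σ δ k) = LinearMap.id := by
    rw [← hmul, e2]; exact hid
  constructor
  · intro x y hxy
    have := congrArg (sigmaStarL σ δ ki) hxy
    simpa [← LinearMap.comp_apply, h2] using this
  · intro y
    refine ⟨sigmaStarL σ δ ki y, ?_⟩
    simpa using LinearMap.congr_fun h1 y
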